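/- Let α ∈ ℝ, β : ℤ → [0,1), and γ : ℤ² → [0,1) be arbitrary functions, and set Λ = { (α + k, β(k) + l, γ(k,l) + m) : k, l, m ∈ ℤ } ⊂ ℝ³. Then ([0,1]³, Λ) is a spectral pair; that is, the family { e_λ|_{[0,1]³} : λ ∈ Λ } is an orthogonal basis of L²([0,1]³). -/

import Mathlib

open MeasureTheory Set Filter
open scoped ENNReal NNReal


/-- The exponential `e_λ(x) = e^{2πi λ·x}` on `ℝ³`. -/
noncomputable def expFn3 (l : ℝ × ℝ × ℝ) : ℝ × ℝ × ℝ → ℂ :=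
  fun x => Complex.exp (2 * Real.pi * Complex.I *
    (l.1 * x.1 + l.2.1 * x.2.1 + l.2.2 * x.2.2))

/-- The closed unit cube `[0,1]³`. -/
def unitCube3 : Set (ℝ × ℝ × ℝ) :=
  Set.Icc (0 : ℝ) 1 ×ˢ Set.Icc (0 : ℝ) 1 ×ˢ Set.Icc (0 : ℝ) 1

open Classical in
/-- The element of `L²(Ω)` determined by a function `f : ℝ³ → ℂ`
(junk value `0` if `f` is not square-integrable on `Ω`). -/
noncomputable def toL2 (Ω : Set (ℝ × ℝ × ℝ)) (f : ℝ × ℝ × ℝ → ℂ) :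
    Lp ℂ 2 (volume.restrict Ω) :=
  if h : MemLp f 2 (volume.restrict Ω) then h.toLp f else 0

/-- `(Ω, Λ)` is a spectral pair: the restrictions `e_λ|_Ω`, `λ ∈ Λ`, are pairwise
orthogonal nonzero elements of `L²(Ω)` whose linear span is dense in `L²(Ω)`. -/
def IsSpectralPair (Ω : Set (ℝ × ℝ × ℝ)) (Λ : Set (ℝ × ℝ × ℝ)) : Prop :=
  (∀ l ∈ Λ, toL2 Ω (expFn3 l) ≠ 0) ∧
  (∀ l ∈ Λ, ∀ m ∈ Λ, l ≠ m → (inner ℂ (toL2 Ω (expFn3 l)) (toL2 Ω (expFn3 m)) : ℂ) = 0) ∧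
  Dense (↑(Submodule.span ℂ ((fun l => toL2 Ω (expFn3 l)) '' Λ)) :
    Set (Lp ℂ 2 (volume.restrict Ω)))

namespace SpectralAux


noncomputable def eF (t : ℝ) : ℂ := Complex.exp (2 * Real.pi * Complex.I * t)

lemma eF_add (s t : ℝ) : eF (s + t) = eF s * eF t := by
  simp [eF, ← Complex.exp_add]; ring_nf

lemma eF_norm (t : ℝ) : ‖eF t‖ = 1 := by
  simp [eF, Complex.norm_exp]

lemma eF_ne_zero (t : ℝ) : eF t ≠ 0 := Complex.exp_ne_zero _

lemma eF_conj (t : ℝ) : (starRingEnd ℂ) (eF t) = eF (-t) := by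
  rw [eF, ← Complex.exp_conj]
  congr 1
  simp [Complex.ext_iff]

lemma eF_continuous : Continuous eF := by
  exact Complex.continuous_exp.comp (by continuity)

lemma eF_measurable : Measurable eF := eF_continuous.measurable

noncomputable abbrev μ1 : Measure ℝ := volume.restrict (Icc 0 1)

instance : IsProbabilityMeasure μ1 :=
  ⟨by simp [Real.volume_Icc]⟩

lemma μ1_Ioc : μ1 = volume.restrict (Ioc 0 1) :=
  (Measure.restrict_congr_set Ioc_ae_eq_Icc).symm

lemma integral_eF_int {n : ℤ} (hn : n ≠ 0) : ∫ x, eF (n * x) ∂μ1 = 0 := by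
  rw [μ1_Ioc]
  have h01 : (0:ℝ) ≤ 1 := zero_le_one
  rw [← intervalIntegral.integral_of_le h01]
  have hc : (2 * Real.pi * Complex.I * n) ≠ 0 := by
    simp [Real.pi_ne_zero, Complex.I_ne_zero, hn]
  have : ∀ x : ℝ, eF (n * x) = Complex.exp ((2 * Real.pi * Complex.I * n) * x) := by
    intro x; rw [eF]; push_cast; ring_nf
  simp_rw [this]
  rw [integral_exp_mul_complex hc]
  have h1 : Complex.exp (2 * Real.pi * Complex.I * n * (1:ℝ)) = 1 := by
    push_cast
    rw [mul_one]
    have := Complex.exp_int_mul_two_pi_mul_I n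
    rw [← this]; congr 1; ring
  have h0 : Complex.exp (2 * Real.pi * Complex.I * n * (0:ℝ)) = 1 := by
    push_cast; rw [mul_zero, Complex.exp_zero]
  rw [h1, h0]
  simp

section OneD

open AddCircle

lemma complete1D (θ : ℝ) {g : ℝ → ℂ} (hg : MemLp g 2 μ1)
    (h : ∀ n : ℤ, ∫ x, eF (-((θ + n) * x)) * g x ∂μ1 = 0) : g =ᵐ[μ1] 0 := by
  haveI : Fact (0 < (1:ℝ)) := ⟨one_pos⟩
  -- replace g by a strongly measurable representative
  set gm : ℝ → ℂ := hg.1.mk g with hgmdef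
  have hgm : StronglyMeasurable gm := hg.1.stronglyMeasurable_mk
  have hgg : g =ᵐ[μ1] gm := hg.1.ae_eq_mk
  suffices hs : gm =ᵐ[μ1] 0 from hgg.trans hs
  have hgm2 : MemLp gm 2 μ1 := hg.ae_eq hgg
  have h' : ∀ n : ℤ, ∫ x, eF (-((θ + n) * x)) * gm x ∂μ1 = 0 := by
    intro n
    rw [← h n]
    apply integral_congr_ae
    filter_upwards [hgg] with x hx
    rw [hx]
  set h2 : ℝ → ℂ := fun x => eF (-(θ * x)) * gm x with hh2
  have h2m : StronglyMeasurable h2 := by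
    apply StronglyMeasurable.mul _ hgm
    exact (eF_continuous.comp (continuous_const.mul continuous_id).neg).stronglyMeasurable
  have h2mem : MemLp h2 2 μ1 := by
    apply hgm2.of_le h2m.aestronglyMeasurable
    apply ae_of_all
    intro x
    rw [norm_mul, eF_norm, one_mul]
  have hν : μ1 = volume.restrict (Ioc (0:ℝ) (0+1)) := by rw [μ1_Ioc]; norm_num
  have hvol : (haarAddCircle : Measure (AddCircle (1:ℝ))) = volume := by
    rw [AddCircle.volume_eq_smul_haarAddCircle]; simp
  have mp : MeasurePreserving ((↑) : ℝ → AddCircle (1:ℝ))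
      (volume.restrict (Ioc (0:ℝ) (0+1))) haarAddCircle := by
    rw [hvol]; exact AddCircle.measurePreserving_mk 1 0
  set H : AddCircle (1:ℝ) → ℂ := liftIoc 1 0 h2 with hHdef
  have Hmk : ∀ᵐ x : ℝ ∂(volume.restrict (Ioc (0:ℝ) (0+1))), H (x : AddCircle (1:ℝ)) = h2 x := by
    filter_upwards [ae_restrict_mem measurableSet_Ioc] with x hx
    exact liftIoc_coe_apply hx
  have Hm : StronglyMeasurable H := by
    have hc : Measurable (fun z : AddCircle (1:ℝ) => ((equivIoc 1 0 z : ℝ))) :=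
      measurable_subtype_coe.comp (measurableEquivIoc 1 0).measurable
    exact h2m.comp_measurable hc
  have Hmem : MemLp H 2 haarAddCircle := by
    refine ⟨Hm.aestronglyMeasurable, ?_⟩
    rw [← mp.map_eq, eLpNorm_map_measure Hm.aestronglyMeasurable
      AddCircle.measurable_mk'.aemeasurable]
    have : eLpNorm (H ∘ ((↑) : ℝ → AddCircle (1:ℝ))) 2 (volume.restrict (Ioc (0:ℝ) (0+1)))
        = eLpNorm h2 2 (volume.restrict (Ioc (0:ℝ) (0+1))) := by
      apply eLpNorm_congr_ae
      filter_upwards [Hmk] with x hx using hx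
    rw [this, ← hν]
    exact h2mem.2
  have coeffs : ∀ n : ℤ, fourierCoeff H n = 0 := by
    intro n
    rw [fourierCoeff, ← mp.map_eq,
      integral_map AddCircle.measurable_mk'.aemeasurable
        (by rw [mp.map_eq]
            exact ((map_continuous (fourier (-n))).stronglyMeasurable.smul Hm).aestronglyMeasurable)]
    rw [← h' n, hν]
    apply integral_congr_ae
    filter_upwards [Hmk] with x hx
    rw [hx]
    have hfc : (fourier (-n) (↑x : AddCircle (1:ℝ))) = eF (-((n:ℝ) * x)) := by
      rw [fourier_coe_apply, eF]
      congr 1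
      push_cast
      ring
    rw [smul_eq_mul, hfc, hh2]
    rw [← mul_assoc, ← eF_add]
    congr 2
    ring
  set F : Lp ℂ 2 (haarAddCircle : Measure (AddCircle (1:ℝ))) := Hmem.toLp H with hF
  have hrepr : fourierBasis.repr F = 0 := by
    ext n
    rw [fourierBasis_repr]
    have : fourierCoeff (F : AddCircle (1:ℝ) → ℂ) n = fourierCoeff H n := by
      apply integral_congr_ae
      filter_upwards [Hmem.coeFn_toLp] with t ht
      rw [ht]
    rw [this, coeffs n]
    rfl
  have hF0 : F = 0 := by
    have := fourierBasis.repr.map_eq_zero_iff (x := F)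
    exact this.mp hrepr
  have hH0 : H =ᵐ[haarAddCircle] 0 := by
    have h1 : (F : AddCircle (1:ℝ) → ℂ) =ᵐ[haarAddCircle] H := Hmem.coeFn_toLp
    have h2 : (F : AddCircle (1:ℝ) → ℂ) =ᵐ[haarAddCircle] 0 := by
      rw [hF0]; exact Lp.coeFn_zero _ _ _
    exact h1.symm.trans h2
  have hcomp : h2 =ᵐ[μ1] 0 := by
    rw [hν]
    have : (H ∘ ((↑) : ℝ → AddCircle (1:ℝ))) =ᵐ[volume.restrict (Ioc (0:ℝ) (0+1))]
        ((0 : AddCircle (1:ℝ) → ℂ) ∘ ((↑) : ℝ → AddCircle (1:ℝ))) := by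
      apply ae_eq_comp AddCircle.measurable_mk'.aemeasurable
      rw [mp.map_eq]; exact hH0
    filter_upwards [Hmk, this] with x hx h0
    rw [← hx]
    exact h0
  filter_upwards [hcomp] with x hx
  have : eF (-(θ * x)) * gm x = 0 := hx
  rcases mul_eq_zero.mp this with h0 | h0
  · exact absurd h0 (eF_ne_zero _)
  · exact h0

end OneD

section Helpers

variable {X Y : Type*} [MeasurableSpace X] [MeasurableSpace Y]
  {μ : Measure X} {ν : Measure Y} [SFinite μ] [SFinite ν]

lemma ae_ae_of_ae_prod_symm {p : X × Y → Prop} (h : ∀ᵐ q ∂μ.prod ν, p q) :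
    ∀ᵐ y ∂ν, ∀ᵐ x ∂μ, p (x, y) := by
  have mp : MeasurePreserving Prod.swap (ν.prod μ) (μ.prod ν) :=
    Measure.measurePreserving_swap
  have h' : ∀ᵐ q ∂ν.prod μ, p q.swap :=
    mp.quasiMeasurePreserving.tendsto_ae.eventually h
  exact Measure.ae_ae_of_ae_prod h'

lemma ae_zero_of_ae_sections {f : X × Y → ℂ} (hf : AEStronglyMeasurable f (μ.prod ν))
    (h : ∀ᵐ y ∂ν, (fun x => f (x, y)) =ᵐ[μ] 0) : f =ᵐ[μ.prod ν] 0 := by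
  have hint : ∫⁻ q, (‖f q‖₊ : ℝ≥0∞) ∂(μ.prod ν) = 0 := by
    rw [MeasureTheory.lintegral_prod_symm _ hf.nnnorm.aemeasurable.coe_nnreal_ennreal]
    have hz : ∀ᵐ y ∂ν, ∫⁻ x, (‖f (x, y)‖₊ : ℝ≥0∞) ∂μ = 0 := by
      filter_upwards [h] with y hy
      have : (fun x => (‖f (x, y)‖₊ : ℝ≥0∞)) =ᵐ[μ] 0 := by
        filter_upwards [hy] with x hx
        simp only [Pi.zero_apply] at hx ⊢
        simp [hx]
      rw [lintegral_congr_ae this]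
      simp
    rw [lintegral_congr_ae hz]
    simp
  have := (lintegral_eq_zero_iff' hf.enorm).mp hint
  filter_upwards [this] with q hq
  simpa using hq

lemma memLp2_iff {Z : Type*} [MeasurableSpace Z] {μ0 : Measure Z} {f : Z → ℂ}
    (hm : AEStronglyMeasurable f μ0) :
    MemLp f 2 μ0 ↔ ∫⁻ z, (‖f z‖₊ : ℝ≥0∞) ^ (2:ℕ) ∂μ0 < ⊤ := by
  have hrw : ∀ a : ℝ≥0∞, a ^ ((2:ℝ≥0∞).toReal) = a ^ (2:ℕ) := by
    intro a
    rw [ENNReal.toReal_ofNat, ← ENNReal.rpow_natCast]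
    norm_num
  constructor
  · intro hmem
    have h2 := hmem.2
    rw [eLpNorm_eq_lintegral_rpow_enorm_toReal two_ne_zero ENNReal.ofNat_ne_top] at h2
    simp_rw [hrw] at h2
    rw [ENNReal.rpow_lt_top_iff_of_pos (by norm_num)] at h2
    exact h2
  · intro hfin
    refine ⟨hm, ?_⟩
    rw [eLpNorm_eq_lintegral_rpow_enorm_toReal two_ne_zero ENNReal.ofNat_ne_top]
    simp_rw [hrw]
    rw [ENNReal.rpow_lt_top_iff_of_pos (by norm_num)]
    exact hfin

lemma lintegral_sq_le {Z : Type*} [MeasurableSpace Z] (μ0 : Measure Z)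
    [IsProbabilityMeasure μ0] {g : Z → ℝ≥0∞} (hg : AEMeasurable g μ0) :
    (∫⁻ z, g z ∂μ0) ^ (2:ℕ) ≤ ∫⁻ z, g z ^ (2:ℕ) ∂μ0 := by
  have hpq : Real.HolderConjugate 2 2 := Real.HolderConjugate.two_two
  have h := ENNReal.lintegral_mul_le_Lp_mul_Lq μ0 hpq hg
    (aemeasurable_const (b := (1:ℝ≥0∞)))
  simp only [Pi.mul_apply, mul_one, ENNReal.one_rpow, lintegral_one, measure_univ,
    ENNReal.one_rpow] at h
  have h' : ∫⁻ z, g z ∂μ0 ≤ (∫⁻ z, g z ^ (2:ℝ) ∂μ0) ^ ((1:ℝ)/2) := by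
    simpa using h
  calc (∫⁻ z, g z ∂μ0) ^ (2:ℕ)
      ≤ ((∫⁻ z, g z ^ (2:ℝ) ∂μ0) ^ ((1:ℝ)/2)) ^ (2:ℕ) := pow_le_pow_left₀ (by positivity) h' 2
    _ = ∫⁻ z, g z ^ (2:ℕ) ∂μ0 := by
        rw [← ENNReal.rpow_natCast (((∫⁻ z, g z ^ (2:ℝ) ∂μ0)) ^ ((1:ℝ)/2)) 2,
          ← ENNReal.rpow_mul]
        norm_num

lemma ae_sections_memLp2 {f : X × Y → ℂ} (hf : MemLp f 2 (μ.prod ν)) :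
    ∀ᵐ y ∂ν, MemLp (fun x => f (x, y)) 2 μ := by
  -- sections a.e. strongly measurable
  have hsm : ∀ᵐ y ∂ν, AEStronglyMeasurable (fun x => f (x, y)) μ := by
    have := (hf.1.prod_swap (f := f)).prodMk_left
    filter_upwards [this] with y hy
    exact hy
  -- finiteness via a measurable representative
  set fm : X × Y → ℂ := hf.1.mk f with hfm
  have hfmm : StronglyMeasurable fm := hf.1.stronglyMeasurable_mk
  have hae : f =ᵐ[μ.prod ν] fm := hf.1.ae_eq_mk
  have hfm2 : MemLp fm 2 (μ.prod ν) := hf.ae_eq hae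
  have hfin : ∫⁻ y, ∫⁻ x, (‖fm (x, y)‖₊ : ℝ≥0∞) ^ (2:ℕ) ∂μ ∂ν < ⊤ := by
    rw [← MeasureTheory.lintegral_prod_symm _ (hfmm.measurable.nnnorm.coe_nnreal_ennreal.pow_const 2).aemeasurable]
    exact (memLp2_iff hfmm.aestronglyMeasurable).mp hfm2
  have hmeas : Measurable fun y => ∫⁻ x, (‖fm (x, y)‖₊ : ℝ≥0∞) ^ (2:ℕ) ∂μ := by
    have : Measurable fun q : X × Y => (‖fm q‖₊ : ℝ≥0∞) ^ (2:ℕ) :=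
      hfmm.measurable.enorm.pow_const 2
    exact this.lintegral_prod_left'
  have hsec : ∀ᵐ y ∂ν, ∫⁻ x, (‖fm (x, y)‖₊ : ℝ≥0∞) ^ (2:ℕ) ∂μ < ⊤ :=
    ae_lt_top hmeas hfin.ne
  have haesec : ∀ᵐ y ∂ν, (fun x => f (x, y)) =ᵐ[μ] (fun x => fm (x, y)) :=
    ae_ae_of_ae_prod_symm hae
  filter_upwards [hsm, hsec, haesec] with y h1 h2 h3
  have : MemLp (fun x => fm (x, y)) 2 μ :=
    (memLp2_iff (hfmm.comp_measurable measurable_prodMk_right).aestronglyMeasurable).mpr h2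
  exact this.ae_eq h3.symm

lemma memLp2_integral_section [IsProbabilityMeasure μ] {f : X × Y → ℂ}
    (hf : MemLp f 2 (μ.prod ν)) :
    MemLp (fun y => ∫ x, f (x, y) ∂μ) 2 ν := by
  have hsm : AEStronglyMeasurable (fun y => ∫ x, f (x, y) ∂μ) ν := by
    have h1 : AEStronglyMeasurable (fun q : Y × X => f q.swap) (ν.prod μ) := hf.1.prod_swap
    exact h1.integral_prod_right'
  rw [memLp2_iff hsm]
  -- pointwise bound
  have hb : ∀ y, (‖∫ x, f (x, y) ∂μ‖₊ : ℝ≥0∞) ^ (2:ℕ) ≤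
      (∫⁻ x, (‖f (x, y)‖₊ : ℝ≥0∞) ∂μ) ^ (2:ℕ) := fun y =>
    pow_le_pow_left₀ (by positivity) (enorm_integral_le_lintegral_enorm _) 2
  -- a.e. sections are AEMeasurable
  have hsecm : ∀ᵐ y ∂ν, AEStronglyMeasurable (fun x => f (x, y)) μ := by
    have := (hf.1.prod_swap (f := f)).prodMk_left
    filter_upwards [this] with y hy; exact hy
  have key : ∫⁻ y, (‖∫ x, f (x, y) ∂μ‖₊ : ℝ≥0∞) ^ (2:ℕ) ∂ν ≤
      ∫⁻ y, ∫⁻ x, (‖f (x, y)‖₊ : ℝ≥0∞) ^ (2:ℕ) ∂μ ∂ν := by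
    apply lintegral_mono_ae
    filter_upwards [hsecm] with y hy
    calc (‖∫ x, f (x, y) ∂μ‖₊ : ℝ≥0∞) ^ (2:ℕ)
        ≤ (∫⁻ x, (‖f (x, y)‖₊ : ℝ≥0∞) ∂μ) ^ (2:ℕ) := hb y
      _ ≤ ∫⁻ x, (‖f (x, y)‖₊ : ℝ≥0∞) ^ (2:ℕ) ∂μ := lintegral_sq_le μ hy.enorm
  have hfin : ∫⁻ y, ∫⁻ x, (‖f (x, y)‖₊ : ℝ≥0∞) ^ (2:ℕ) ∂μ ∂ν < ⊤ := by
    rw [← MeasureTheory.lintegral_prod_symm _ (hf.1.nnnorm.aemeasurable.coe_nnreal_ennreal.pow_const 2)]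
    exact (memLp2_iff hf.1).mp hf
  exact lt_of_le_of_lt key hfin

end Helpers

section Step

variable {Y : Type*} [MeasurableSpace Y] {ν : Measure Y}

lemma step [IsProbabilityMeasure ν] (θ : ℝ)
    {ι : Type*} [Countable ι]
    (E : ℤ → ι → Y → ℂ)
    (hEm : ∀ k i, Measurable (E k i))
    (hEb : ∀ k i y, ‖E k i y‖ ≤ 1)
    (hcomp : ∀ (k : ℤ) (G : Y → ℂ), MemLp G 2 ν →
      (∀ i, ∫ y, E k i y * G y ∂ν = 0) → G =ᵐ[ν] 0)
    {g : ℝ × Y → ℂ} (hg : MemLp g 2 (μ1.prod ν))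
    (h : ∀ (k : ℤ) (i : ι),
      ∫ p, eF (-((θ + k) * p.1)) * E k i p.2 * g p ∂(μ1.prod ν) = 0) :
    g =ᵐ[μ1.prod ν] 0 := by
  have hgint : Integrable g (μ1.prod ν) := hg.integrable one_le_two
  set G : ℤ → Y → ℂ := fun k y => ∫ x, eF (-((θ + k) * x)) * g (x, y) ∂μ1 with hGdef
  have heFm : ∀ k : ℤ, Measurable fun x : ℝ => eF (-((θ + k) * x)) := fun k =>
    eF_measurable.comp ((measurable_const.mul measurable_id).neg)
  have hGmem : ∀ k : ℤ, MemLp (G k) 2 ν := by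
    intro k
    have hmul : MemLp (fun p : ℝ × Y => eF (-((θ + k) * p.1)) * g p) 2 (μ1.prod ν) := by
      refine hg.of_le ?_ (ae_of_all _ fun p => ?_)
      · exact (((heFm k).comp measurable_fst).aestronglyMeasurable).mul hg.1
      · rw [norm_mul, eF_norm, one_mul]
    exact memLp2_integral_section hmul
  have hGzero : ∀ k : ℤ, G k =ᵐ[ν] 0 := by
    intro k
    apply hcomp k (G k) (hGmem k)
    intro i
    have hInt : Integrable (fun p : ℝ × Y => eF (-((θ + k) * p.1)) * E k i p.2 * g p)
        (μ1.prod ν) := by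
      apply hgint.bdd_mul (c := 1)
      · exact (((heFm k).comp measurable_fst).mul
          ((hEm k i).comp measurable_snd)).aestronglyMeasurable
      · refine ae_of_all _ fun p => ?_
        rw [norm_mul, eF_norm, one_mul]
        exact hEb k i p.2
    have h2 := (MeasureTheory.integral_prod_symm _ hInt).symm.trans (h k i)
    -- h2 : ∫ y, ∫ x, eF(..x) * E k i y * g (x,y) ∂μ1 ∂ν = 0
    have h3 : ∀ y : Y, (∫ x, eF (-((θ + k) * x)) * E k i y * g (x, y) ∂μ1)
        = E k i y * G k y := by
      intro y
      rw [hGdef]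
      simp only
      rw [← MeasureTheory.integral_const_mul]
      apply integral_congr_ae
      apply ae_of_all
      intro x
      ring
    rw [← h2]
    apply integral_congr_ae
    apply ae_of_all
    intro y
    exact (h3 y).symm
  have hGall : ∀ᵐ y ∂ν, ∀ k : ℤ, G k y = 0 := by
    rw [ae_all_iff]
    intro k
    filter_upwards [hGzero k] with y hy using hy
  have hsect := ae_sections_memLp2 hg
  have hzero : ∀ᵐ y ∂ν, (fun x => g (x, y)) =ᵐ[μ1] 0 := by
    filter_upwards [hGall, hsect] with y h1 h2
    apply complete1D θ h2
    intro n
    exact h1 n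
  exact ae_zero_of_ae_sections hg.1 hzero

end Step

section HigherD

lemma complete2D (θ : ℝ) (φ : ℤ → ℝ) {g : ℝ × ℝ → ℂ} (hg : MemLp g 2 (μ1.prod μ1))
    (h : ∀ l n : ℤ, ∫ p, eF (-((θ + l) * p.1)) * eF (-((φ l + n) * p.2)) * g p
      ∂(μ1.prod μ1) = 0) :
    g =ᵐ[μ1.prod μ1] 0 := by
  refine step θ (fun l (n : ℤ) z => eF (-((φ l + n) * z))) ?_ ?_ ?_ hg h
  · intro l n
    exact eF_measurable.comp ((measurable_const.mul measurable_id).neg)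
  · intro l n z
    rw [eF_norm]
  · intro l Gf hGf hz
    apply complete1D (φ l) hGf
    intro n
    exact hz n

lemma complete3D (a : ℝ) (b : ℤ → ℝ) (c : ℤ × ℤ → ℝ) {g : ℝ × ℝ × ℝ → ℂ}
    (hg : MemLp g 2 (μ1.prod (μ1.prod μ1)))
    (h : ∀ k l n : ℤ, ∫ p, eF (-((a + k) * p.1)) *
        (eF (-((b k + l) * p.2.1)) * eF (-((c (k, l) + n) * p.2.2))) * g p
      ∂(μ1.prod (μ1.prod μ1)) = 0) :
    g =ᵐ[μ1.prod (μ1.prod μ1)] 0 := by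
  refine step a (fun k (i : ℤ × ℤ) w =>
    eF (-((b k + i.1) * w.1)) * eF (-((c (k, i.1) + i.2) * w.2))) ?_ ?_ ?_ hg ?_
  · intro k i
    exact ((eF_measurable.comp ((measurable_const.mul measurable_fst).neg)).mul
      (eF_measurable.comp ((measurable_const.mul measurable_snd).neg)))
  · intro k i w
    rw [norm_mul, eF_norm, eF_norm, one_mul]
  · intro k Gf hGf hz
    apply complete2D (b k) (fun l => c (k, l)) hGf
    intro l n
    exact hz (l, n)
  · intro k i
    exact h k i.1 i.2
  
end HigherD

section Final

lemma cube_eq : (volume.restrict unitCube3) = μ1.prod (μ1.prod μ1) := by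
  rw [unitCube3]
  rw [show (volume : Measure (ℝ × ℝ × ℝ)) =
      (volume : Measure ℝ).prod (volume : Measure (ℝ × ℝ)) from Measure.volume_eq_prod ℝ (ℝ × ℝ)]
  rw [← Measure.prod_restrict]
  congr 1
  rw [show (volume : Measure (ℝ × ℝ)) =
      (volume : Measure ℝ).prod (volume : Measure ℝ) from Measure.volume_eq_prod ℝ ℝ]
  rw [← Measure.prod_restrict]

instance : IsProbabilityMeasure (volume.restrict unitCube3) := by
  rw [cube_eq]; infer_instance

lemma expFn3_eq (l x : ℝ × ℝ × ℝ) :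
    expFn3 l x = eF (l.1 * x.1 + l.2.1 * x.2.1 + l.2.2 * x.2.2) := by
  rw [expFn3, eF]
  push_cast
  ring_nf

lemma expFn3_continuous (l : ℝ × ℝ × ℝ) : Continuous (expFn3 l) := by
  apply Complex.continuous_exp.comp
  fun_prop

lemma memLp_expFn3 (l : ℝ × ℝ × ℝ) :
    MemLp (expFn3 l) 2 (volume.restrict unitCube3) := by
  apply MemLp.of_bound (expFn3_continuous l).aestronglyMeasurable 1
  apply ae_of_all
  intro x
  rw [expFn3_eq, eF_norm]

lemma toL2_expFn3 (l : ℝ × ℝ × ℝ) :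
    toL2 unitCube3 (expFn3 l) = (memLp_expFn3 l).toLp (expFn3 l) := by
  rw [toL2, dif_pos (memLp_expFn3 l)]

lemma inner_toLp {μ : Measure (ℝ × ℝ × ℝ)} {f : ℝ × ℝ × ℝ → ℂ}
    (hf : MemLp f 2 μ) (g : Lp ℂ 2 μ) :
    (inner ℂ (hf.toLp f) g : ℂ) = ∫ p, (starRingEnd ℂ) (f p) * g p ∂μ := by
  rw [MeasureTheory.L2.inner_def]
  apply integral_congr_ae
  filter_upwards [hf.coeFn_toLp] with p h1
  rw [h1]
  simp [RCLike.inner_apply]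
  ring

lemma inner_toLp_toLp {μ : Measure (ℝ × ℝ × ℝ)} {f g : ℝ × ℝ × ℝ → ℂ}
    (hf : MemLp f 2 μ) (hg : MemLp g 2 μ) :
    (inner ℂ (hf.toLp f) (hg.toLp g) : ℂ) = ∫ p, (starRingEnd ℂ) (f p) * g p ∂μ := by
  rw [inner_toLp hf]
  apply integral_congr_ae
  filter_upwards [hg.coeFn_toLp] with p h1
  rw [h1]

lemma integral_triple_eF (d1 d2 d3 : ℝ) :
    ∫ p : ℝ × ℝ × ℝ, eF (d1 * p.1) * (eF (d2 * p.2.1) * eF (d3 * p.2.2))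
        ∂(μ1.prod (μ1.prod μ1))
      = (∫ x, eF (d1 * x) ∂μ1) *
        ((∫ x, eF (d2 * x) ∂μ1) * (∫ x, eF (d3 * x) ∂μ1)) := by
  rw [MeasureTheory.integral_prod_mul (μ := μ1) (ν := μ1.prod μ1)
    (f := fun x => eF (d1 * x)) (g := fun w => eF (d2 * w.1) * eF (d3 * w.2))]
  rw [MeasureTheory.integral_prod_mul (μ := μ1) (ν := μ1)
    (f := fun x => eF (d2 * x)) (g := fun w => eF (d3 * w))]

lemma integral_eF_eq_zero {d : ℝ} {n : ℤ} (hd : d = (n : ℝ)) (hn : n ≠ 0) :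
    ∫ x, eF (d * x) ∂μ1 = 0 := by
  rw [hd]
  exact integral_eF_int hn

end Final

end SpectralAux

open SpectralAux

/-- For arbitrary `α ∈ ℝ`, `β : ℤ → [0,1)` and `γ : ℤ² → [0,1)`, the set
`Λ = {(α + k, β(k) + l, γ(k,l) + m) : k, l, m ∈ ℤ}` makes `([0,1]³, Λ)` a spectral pair. -/
theorem spectralPair_unitCube3 (α : ℝ) (β : ℤ → ℝ) (γ : ℤ × ℤ → ℝ)
    (hβ : ∀ k : ℤ, β k ∈ Set.Ico (0 : ℝ) 1)
    (hγ : ∀ p : ℤ × ℤ, γ p ∈ Set.Ico (0 : ℝ) 1) :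
    IsSpectralPair unitCube3
      {p : ℝ × ℝ × ℝ | ∃ k l m : ℤ, p = (α + k, β k + l, γ (k, l) + m)} := by
  refine ⟨?_, ?_, ?_⟩
  · -- nonvanishing
    intro lam _ hzero
    rw [toL2_expFn3] at hzero
    have h1 := (memLp_expFn3 lam).coeFn_toLp
    rw [hzero] at h1
    have h2 : ((0 : Lp ℂ 2 (volume.restrict unitCube3)) : ℝ × ℝ × ℝ → ℂ)
        =ᵐ[volume.restrict unitCube3] 0 := Lp.coeFn_zero _ _ _
    have hcoe : expFn3 lam =ᵐ[volume.restrict unitCube3] 0 := h1.symm.trans h2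
    have hFalse : ∀ᵐ p ∂(volume.restrict unitCube3), False := by
      filter_upwards [hcoe] with p hp
      simp only [Pi.zero_apply] at hp
      exact Complex.exp_ne_zero _ hp
    have hμ : (volume.restrict unitCube3) = 0 := by
      rwa [Filter.eventually_false_iff_eq_bot, ae_eq_bot] at hFalse
    have hone : (1 : ENNReal) = 0 := by
      rw [← measure_univ (μ := volume.restrict unitCube3), hμ]
      simp
    exact one_ne_zero hone
  · -- orthogonality
    rintro lam ⟨k, l, m, rfl⟩ mu ⟨k', l', m', rfl⟩ hne
    rw [toL2_expFn3, toL2_expFn3, inner_toLp_toLp, cube_eq]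
    set d1 : ℝ := (α + k') - (α + k) with hd1
    set d2 : ℝ := (β k' + l') - (β k + l) with hd2
    set d3 : ℝ := (γ (k', l') + m') - (γ (k, l) + m) with hd3
    have hpt : ∀ p : ℝ × ℝ × ℝ,
        (starRingEnd ℂ) (expFn3 (α + k, β k + l, γ (k, l) + m) p) *
          expFn3 (α + k', β k' + l', γ (k', l') + m') p
        = eF (d1 * p.1) * (eF (d2 * p.2.1) * eF (d3 * p.2.2)) := by
      intro p
      rw [expFn3_eq, expFn3_eq, eF_conj, ← eF_add, ← eF_add, ← eF_add]
      congr 1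
      rw [hd1, hd2, hd3]
      ring
    have hrw : ∫ p : ℝ × ℝ × ℝ,
        (starRingEnd ℂ) (expFn3 (α + k, β k + l, γ (k, l) + m) p) *
          expFn3 (α + k', β k' + l', γ (k', l') + m') p ∂(μ1.prod (μ1.prod μ1))
        = ∫ p : ℝ × ℝ × ℝ, eF (d1 * p.1) * (eF (d2 * p.2.1) * eF (d3 * p.2.2))
            ∂(μ1.prod (μ1.prod μ1)) :=
      integral_congr_ae (Filter.Eventually.of_forall hpt)
    rw [hrw, integral_triple_eF]
    by_cases hk : k = k'
    · subst hk
      by_cases hl : l = l'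
      · subst hl
        by_cases hm : m = m'
        · subst hm
          exact absurd rfl hne
        · have h3 : ∫ x, eF (d3 * x) ∂μ1 = 0 := by
            apply integral_eF_eq_zero (n := m' - m)
            · rw [hd3]; push_cast; ring
            · exact sub_ne_zero.mpr (Ne.symm hm)
          rw [h3]
          ring
      · have h2 : ∫ x, eF (d2 * x) ∂μ1 = 0 := by
          apply integral_eF_eq_zero (n := l' - l)
          · rw [hd2]; push_cast; ring
          · exact sub_ne_zero.mpr (Ne.symm hl)
        rw [h2]
        ring
    · have h1 : ∫ x, eF (d1 * x) ∂μ1 = 0 := by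
        apply integral_eF_eq_zero (n := k' - k)
        · rw [hd1]; push_cast; ring
        · exact sub_ne_zero.mpr (fun hc => hk hc.symm)
      rw [h1]
      ring
  · -- density
    rw [dense_iff_closure_eq]
    have htop : (Submodule.span ℂ ((fun l => toL2 unitCube3 (expFn3 l)) ''
        {p : ℝ × ℝ × ℝ | ∃ k l m : ℤ, p = (α + k, β k + l, γ (k, l) + m)})).topologicalClosure
        = ⊤ := by
      rw [Submodule.topologicalClosure_eq_top_iff, Submodule.eq_bot_iff]
      intro f hf
      have horth : ∀ lam ∈ {p : ℝ × ℝ × ℝ | ∃ k l m : ℤ, p = (α + k, β k + l, γ (k, l) + m)},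
          (inner ℂ (toL2 unitCube3 (expFn3 lam)) f : ℂ) = 0 := fun lam hlam =>
        (Submodule.mem_orthogonal _ f).mp hf _ (Submodule.subset_span ⟨lam, hlam, rfl⟩)
      obtain ⟨g, hg⟩ : ∃ g : ℝ × ℝ × ℝ → ℂ, (f : ℝ × ℝ × ℝ → ℂ) = g := ⟨_, rfl⟩
      have hfm : MemLp g 2 (volume.restrict unitCube3) := hg ▸ Lp.memLp f
      have hfm' : MemLp g 2 (μ1.prod (μ1.prod μ1)) := by
        rw [← cube_eq]; exact hfm
      have hint : ∀ k l m : ℤ, ∫ p : ℝ × ℝ × ℝ, eF (-((α + k) * p.1)) *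
          (eF (-((β k + l) * p.2.1)) * eF (-((γ (k, l) + m) * p.2.2))) * g p
          ∂(μ1.prod (μ1.prod μ1)) = 0 := by
        intro k l m
        have h0 := horth (α + k, β k + l, γ (k, l) + m) ⟨k, l, m, rfl⟩
        rw [toL2_expFn3, inner_toLp] at h0
        rw [hg] at h0
        rw [cube_eq] at h0
        rw [← h0]
        apply integral_congr_ae
        apply Filter.Eventually.of_forall
        intro p
        simp only []
        congr 1
        rw [expFn3_eq, eF_conj, ← eF_add, ← eF_add]
        congr 1
        ring
      have hzero := complete3D α β γ hfm' hint
      have hcoe : g =ᵐ[volume.restrict unitCube3] 0 := by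
        rw [cube_eq]; exact hzero
      have hcoe2 : (f : ℝ × ℝ × ℝ → ℂ) =ᵐ[volume.restrict unitCube3] 0 := by
        rw [hg]; exact hcoe
      exact Lp.ext (hcoe2.trans (Lp.coeFn_zero ℂ 2 (volume.restrict unitCube3)).symm)
    rw [← Submodule.topologicalClosure_coe, htop, Submodule.top_coe]
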